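/- Let e⁺ ≤ ℓ⁺, s, t ≥ 0, L ≥ t, and define e⁻ = e⁺ + s + t, ℓ⁻ = ℓ⁺ + s + L. Suppose B_v, B_w are real numbers with B_v ≥ e⁺ + (ℓ⁺ − e⁺)(1 − σ_v) and e⁻ ≤ B_w ≤ e⁺ + L + s + (ℓ⁺ − e⁺)σ_w, where σ_v, σ_w ∈ {0,1}. If σ_v = 1 and σ_w = 0, then the constraint B_w − B_v − s ≤ L imposes no restriction beyond B_v ≥ e⁺ (i.e., B_w − B_v − s ≤ L holds for every B_v ≥ e⁺); if σ_v = 0 and σ_w = 1, then B_w − B_v − s ≤ L holds for every B_w ≤ ℓ⁻. -/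

import Mathlib

/-! In either case the relaxed bound of the inactive node is the window end of the active
node shifted by exactly `s + L` (with `σ_w = 0` the drop-off bound is `e⁺ + s + L`; with
`σ_v = 0` the pick-up bound is `ℓ⁺`, against `ℓ⁻ = ℓ⁺ + s + L`), so the ride-time
inequality follows from the two bounds alone. -/

theorem ride_time_le_of_le_of_le_add {a Bv Bw s L : ℝ} (hv : a ≤ Bv) (hw : Bw ≤ a + s + L) :
    Bw - Bv - s ≤ L := by
  linarith

theorem ridetime_nonbinding_general (ep lp s L : ℝ)
    (em lm : ℝ) (hlm : lm = lp + s + L)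
    (σv σw : ℝ) :
    (σv = 1 → σw = 0 → ∀ Bv Bw : ℝ,
      ep ≤ Bv → em ≤ Bw → Bw ≤ ep + L + s + (lp - ep) * σw →
        Bw - Bv - s ≤ L) ∧
    (σv = 0 → σw = 1 → ∀ Bv Bw : ℝ,
      ep + (lp - ep) * (1 - σv) ≤ Bv → Bw ≤ lm →
        Bw - Bv - s ≤ L) := by
  constructor
  · rintro - rfl Bv Bw hv - hw
    exact ride_time_le_of_le_of_le_add hv (by linarith)
  · rintro rfl - Bv Bw hv hw
    exact ride_time_le_of_le_of_le_add (a := lp) (by linarith) (by linarith)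

/-- in Model 3, the simplified ride-time constraint `B_w - B_v - s ≤ L`,
combined with the modified time-window bounds, is non-binding when at most one of the
pick-up node `v` and drop-off node `w` is active. -/
theorem ridetime_nonbinding (ep lp s t L : ℝ)
    (he : ep ≤ lp) (hs : 0 ≤ s) (ht : 0 ≤ t) (hL : t ≤ L)
    (em lm : ℝ) (hem : em = ep + s + t) (hlm : lm = lp + s + L)
    (σv σw : ℝ) (hσv : σv = 0 ∨ σv = 1) (hσw : σw = 0 ∨ σw = 1) :
    (σv = 1 → σw = 0 → ∀ Bv Bw : ℝ,
      ep ≤ Bv → em ≤ Bw → Bw ≤ ep + L + s + (lp - ep) * σw →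
        Bw - Bv - s ≤ L) ∧
    (σv = 0 → σw = 1 → ∀ Bv Bw : ℝ,
      ep + (lp - ep) * (1 - σv) ≤ Bv → Bw ≤ lm →
        Bw - Bv - s ≤ L) :=
  ridetime_nonbinding_general ep lp s L em lm hlm σv σw
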